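/- arXiv:2301.06744 — 4 statements merged into one kernel-verified Lean document; each statement's English description precedes it below -/
import Mathlib

section
/- There exist constants c₁, c₂ > 0 (depending on d) such that for every R > 0, the integral ∫₁^∞ s^{d/2 - 2} · exp(-(s + R²/s)) ds lies between c₁·e^{-c₂·R} and c₂·e^{-c₁·R}. More precisely, ∫₁^∞ s^{d/2-2} e^{-(s + R²/s)} ds ≍ e^{-R} in the sense that there exist positive constants a₁, a₂, a₃, a₄ with a₁ e^{-a₂ R} ≤ ∫₁^∞ s^{d/2-2} e^{-(s+R²/s)} ds ≤ a₃ e^{-a₄ R} for all R > 0. -/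
/-!
Since `s / 2 + R ^ 2 / s ≥ R` (AM-GM), the integrand is at most `e^{-R}` times the integrable
function `s ^ max α 0 * e^{-s/2}`, which gives the upper bound. For the lower bound, on the unit
interval `(R + 1, R + 2]` one has `R ^ 2 / s ≤ R` and `s ^ α ≥ e^{-|α| s}`, so the integrand is
at least `e^{-(|α| + 2)(R + 2)}` there.
-/

open MeasureTheory Set Real

noncomputable section

/-- Up to the factor `2 R ^ (α + 1)`, its integral over `(0, ∞)` is `K_{α+1}(2R)`. -/
def besselKIntegrand (α R s : ℝ) : ℝ := s ^ α * exp (-(s + R ^ 2 / s))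

lemma exp_neg_abs_mul_le_rpow (a : ℝ) {s : ℝ} (hs : 1 ≤ s) : exp (-(|a| * s)) ≤ s ^ a := by
  have hs0 : 0 < s := one_pos.trans_le hs
  have hlog : |log s| ≤ s := by
    rw [abs_of_nonneg (log_nonneg hs)]
    linarith [log_le_sub_one_of_pos hs0]
  rw [rpow_def_of_pos hs0, exp_le_exp]
  calc -(|a| * s) ≤ -(|a| * |log s|) := by gcongr
    _ = -|a * log s| := by rw [abs_mul]
    _ ≤ log s * a := by linarith [neg_abs_le (a * log s)]

lemma add_half_le_add_sq_div (R : ℝ) {s : ℝ} (hs : 0 < s) : R + s / 2 ≤ s + R ^ 2 / s := by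
  have key : s + R ^ 2 / s - (R + s / 2) = ((s - R) ^ 2 + R ^ 2) / (2 * s) := by
    field_simp; ring
  have : 0 ≤ ((s - R) ^ 2 + R ^ 2) / (2 * s) := by positivity
  linarith

lemma integrableOn_rpow_mul_exp_neg_half {β : ℝ} (hβ : 0 ≤ β) :
    IntegrableOn (fun s : ℝ => s ^ β * exp (-(1 / 2) * s)) (Ioi 1) := by
  have h := integrableOn_rpow_mul_exp_neg_mul_rpow (p := 1) (by linarith) one_pos
    (by norm_num : (0 : ℝ) < 1 / 2)
  simp only [rpow_one] at h
  exact h.mono_set (Ioi_subset_Ioi zero_le_one)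

namespace besselKIntegrand

variable (α R : ℝ)

lemma nonneg {s : ℝ} (hs : 0 ≤ s) : 0 ≤ besselKIntegrand α R s := by
  unfold besselKIntegrand; positivity

lemma continuousOn : ContinuousOn (besselKIntegrand α R) (Ioi 0) := by
  intro s hs
  have hs0 : s ≠ 0 := (mem_Ioi.mp hs).ne'
  unfold besselKIntegrand
  exact ((continuousAt_id.rpow_const (Or.inl hs0)).mul
    (by fun_prop (disch := assumption))).continuousWithinAt

lemma le_exp_neg_mul {s : ℝ} (hs : 1 ≤ s) :
    besselKIntegrand α R s ≤ exp (-R) * (s ^ max α 0 * exp (-(1 / 2) * s)) := by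
  have hs0 : 0 < s := one_pos.trans_le hs
  have hexp : exp (-(s + R ^ 2 / s)) ≤ exp (-R) * exp (-(1 / 2) * s) := by
    rw [← exp_add, exp_le_exp]
    linarith [add_half_le_add_sq_div R hs0]
  calc besselKIntegrand α R s ≤ s ^ max α 0 * (exp (-R) * exp (-(1 / 2) * s)) :=
        mul_le_mul (rpow_le_rpow_of_exponent_le hs (le_max_left _ _)) hexp (by positivity)
          (by positivity)
    _ = _ := by ring

lemma integrableOn : IntegrableOn (besselKIntegrand α R) (Ioi 1) := by
  refine Integrable.mono' ((integrableOn_rpow_mul_exp_neg_half (le_max_right α 0)).const_mul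
    (exp (-R))) ((continuousOn α R).aestronglyMeasurable measurableSet_Ioi |>.mono_set
      (Ioi_subset_Ioi zero_le_one)) ?_
  filter_upwards [ae_restrict_mem measurableSet_Ioi] with s hs
  rw [norm_of_nonneg (nonneg α R (zero_le_one.trans hs.le))]
  exact le_exp_neg_mul α R hs.le

lemma integral_le :
    ∫ s in Ioi 1, besselKIntegrand α R s ≤
      exp (-R) * ∫ s in Ioi (1 : ℝ), s ^ max α 0 * exp (-(1 / 2) * s) := by
  rw [← integral_const_mul]
  exact setIntegral_mono_on (integrableOn α R)
    ((integrableOn_rpow_mul_exp_neg_half (le_max_right α 0)).const_mul _) measurableSet_Ioi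
    fun s hs => le_exp_neg_mul α R (mem_Ioi.mp hs).le

variable {R}

lemma exp_neg_le (hR : 0 ≤ R) {s : ℝ} (hs : s ∈ Ioc (R + 1) (R + 2)) :
    exp (-((|α| + 2) * (R + 2))) ≤ besselKIntegrand α R s := by
  obtain ⟨hs₁, hs₂⟩ := hs
  have hs0 : 0 < s := by linarith
  have hsq : R ^ 2 / s ≤ R := by rw [div_le_iff₀ hs0]; nlinarith
  calc exp (-((|α| + 2) * (R + 2))) ≤ exp (-(|α| * s)) * exp (-(s + R ^ 2 / s)) := by
        rw [← exp_add, exp_le_exp]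
        nlinarith [abs_nonneg α]
    _ ≤ besselKIntegrand α R s :=
        mul_le_mul_of_nonneg_right (exp_neg_abs_mul_le_rpow α (by linarith)) (exp_pos _).le

lemma exp_neg_le_integral (hR : 0 ≤ R) :
    exp (-((|α| + 2) * (R + 2))) ≤ ∫ s in Ioi 1, besselKIntegrand α R s := by
  have hsub : Ioc (R + 1) (R + 2) ⊆ Ioi 1 := fun s hs => mem_Ioi.mpr (by linarith [hs.1])
  have hunit := setIntegral_ge_of_const_le_real measurableSet_Ioc
    (by rw [Real.volume_Ioc]; exact ENNReal.ofReal_ne_top) (fun s hs => exp_neg_le α hR hs)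
    ((integrableOn α R).mono_set hsub)
  rw [Measure.real, Real.volume_Ioc, ENNReal.toReal_ofReal (by linarith)] at hunit
  calc exp (-((|α| + 2) * (R + 2))) ≤ ∫ s in Ioc (R + 1) (R + 2), besselKIntegrand α R s := by
        linarith
    _ ≤ ∫ s in Ioi 1, besselKIntegrand α R s :=
        setIntegral_mono_set (integrableOn α R)
          (ae_restrict_of_forall_mem measurableSet_Ioi fun s hs =>
            nonneg α R (zero_le_one.trans (mem_Ioi.mp hs).le))
          hsub.eventuallyLE

end besselKIntegrand

theorem exists_bounds_integral_besselKIntegrand (α : ℝ) :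
    ∃ a₁ a₂ a₃ a₄ : ℝ, 0 < a₁ ∧ 0 < a₂ ∧ 0 < a₃ ∧ 0 < a₄ ∧
      ∀ R : ℝ, 0 < R →
        a₁ * exp (-a₂ * R) ≤ ∫ s in Ioi 1, besselKIntegrand α R s ∧
        ∫ s in Ioi 1, besselKIntegrand α R s ≤ a₃ * exp (-a₄ * R) := by
  set C := ∫ s in Ioi (1 : ℝ), s ^ max α 0 * exp (-(1 / 2) * s)
  have hC : 0 ≤ C := setIntegral_nonneg measurableSet_Ioi fun s hs => by
    have : 0 < s := one_pos.trans hs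
    positivity
  refine ⟨exp (-(2 * (|α| + 2))), |α| + 2, C + 1, 1, exp_pos _, by positivity, by linarith,
    one_pos, fun R hR => ⟨?_, ?_⟩⟩
  · calc exp (-(2 * (|α| + 2))) * exp (-(|α| + 2) * R) = exp (-((|α| + 2) * (R + 2))) := by
          rw [← exp_add]; ring_nf
      _ ≤ _ := besselKIntegrand.exp_neg_le_integral α hR.le
  · calc ∫ s in Ioi 1, besselKIntegrand α R s ≤ exp (-R) * C := besselKIntegrand.integral_le α R
      _ ≤ (C + 1) * exp (-1 * R) := by rw [neg_one_mul, mul_comm]; gcongr; linarith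

end

theorem integral_asymp_expR_general (d : ℕ) :
    ∃ a₁ a₂ a₃ a₄ : ℝ, 0 < a₁ ∧ 0 < a₂ ∧ 0 < a₃ ∧ 0 < a₄ ∧
      ∀ R : ℝ, 0 < R →
        a₁ * Real.exp (-a₂ * R) ≤
          (∫ s in Set.Ioi (1:ℝ), s ^ ((d : ℝ) / 2 - 2) * Real.exp (-(s + R ^ 2 / s))) ∧
        (∫ s in Set.Ioi (1:ℝ), s ^ ((d : ℝ) / 2 - 2) * Real.exp (-(s + R ^ 2 / s))) ≤
          a₃ * Real.exp (-a₄ * R) :=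
  exists_bounds_integral_besselKIntegrand ((d : ℝ) / 2 - 2)

theorem integral_asymp_expR (d : ℕ) (hd : 1 ≤ d) :
    ∃ a₁ a₂ a₃ a₄ : ℝ, 0 < a₁ ∧ 0 < a₂ ∧ 0 < a₃ ∧ 0 < a₄ ∧
      ∀ R : ℝ, 0 < R →
        a₁ * Real.exp (-a₂ * R) ≤
          (∫ s in Set.Ioi (1:ℝ), s ^ ((d : ℝ) / 2 - 2) * Real.exp (-(s + R ^ 2 / s))) ∧
        (∫ s in Set.Ioi (1:ℝ), s ^ ((d : ℝ) / 2 - 2) * Real.exp (-(s + R ^ 2 / s))) ≤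
          a₃ * Real.exp (-a₄ * R) :=
  integral_asymp_expR_general d
end

section
/- Let g:[0,∞)→[1,∞) be nondecreasing with doubling constant c₀ (g(2r) ≤ c₀ g(r)), and let t₀(s) = (1+s)/√(g(s)). Let x, y ∈ ℝᵈ with |x| ≤ |y|, c₁ > 1, and 0 < t ≤ C₀ t₀(|x|) with |x-y| ≤ c₁ t^{1/2}. Then there exists a constant c₂ > 0 (depending only on c₀, c₁, C₀) such that |x-y|·√(g(|y|)) + |x-y|²/t ≤ c₂·(1 + t·g(|x|)). -/
set_option maxHeartbeats 1000000 in
theorem offdiag_exponent_control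
    (d : ℕ) (g : ℝ → ℝ) (c₀ c₁ C₀ : ℝ)
    (hc₀ : 0 < c₀) (hc₁ : 1 < c₁) (hC₀ : 0 < C₀)
    (hmono : ∀ r s, 0 ≤ r → r ≤ s → g r ≤ g s)
    (hge : ∀ r, 0 ≤ r → 1 ≤ g r)
    (hdoub : ∀ r, 0 ≤ r → g (2 * r) ≤ c₀ * g r) :
    ∃ c₂ : ℝ, 0 < c₂ ∧
      ∀ (x y : EuclideanSpace ℝ (Fin d)) (t : ℝ),
        ‖x‖ ≤ ‖y‖ → 0 < t → t ≤ C₀ * ((1 + ‖x‖) / Real.sqrt (g ‖x‖)) →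
        ‖x - y‖ ≤ c₁ * Real.sqrt t →
        ‖x - y‖ * Real.sqrt (g ‖y‖) + ‖x - y‖ ^ 2 / t ≤ c₂ * (1 + t * g ‖x‖) := by
  -- c₀ ≥ 1
  have hg1 : (1:ℝ) ≤ g 1 := hge 1 one_pos.le
  have hg12 : g 1 ≤ g (2*1) := hmono 1 (2*1) one_pos.le (by norm_num)
  have hc₀1 : 1 ≤ c₀ := by nlinarith [hdoub 1 one_pos.le]
  -- iterated doubling
  have hiter : ∀ n : ℕ, ∀ r : ℝ, 0 ≤ r → g (2 ^ n * r) ≤ c₀ ^ n * g r := by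
    intro n
    induction n with
    | zero => intro r hr; simp
    | succ n ih =>
      intro r hr
      have h1 : g (2 ^ (n+1) * r) = g (2 * (2 ^ n * r)) := by ring_nf
      have h2 : g (2 * (2 ^ n * r)) ≤ c₀ * g (2 ^ n * r) :=
        hdoub _ (by positivity)
      have h3 : c₀ * g (2 ^ n * r) ≤ c₀ * (c₀ ^ n * g r) := by
        have := ih r hr; nlinarith
      calc g (2 ^ (n+1) * r) = g (2 * (2 ^ n * r)) := h1
        _ ≤ c₀ * g (2 ^ n * r) := h2
        _ ≤ c₀ ^ (n+1) * g r := by rw [pow_succ]; nlinarith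
  set A : ℝ := 1 + c₁ * Real.sqrt C₀ with hAdef
  have hA1 : 1 ≤ A := by
    have : 0 ≤ c₁ * Real.sqrt C₀ := by positivity
    linarith
  obtain ⟨n, hn⟩ := pow_unbounded_of_one_lt (2 * A) (by norm_num : (1:ℝ) < 2)
  set M : ℝ := max (c₀ ^ n) (g (2 * A)) with hMdef
  have hM1 : 1 ≤ M := le_trans (one_le_pow₀ hc₀1)
      (le_max_left _ _)
  refine ⟨c₁ * Real.sqrt M + c₁ ^ 2, by positivity, ?_⟩
  intro x y t hxy ht htle hdist
  set a := ‖x‖ with ha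
  set b := ‖y‖ with hb
  set r := ‖x - y‖ with hr
  have ha0 : 0 ≤ a := norm_nonneg _
  have hb0 : 0 ≤ b := norm_nonneg _
  have hr0 : 0 ≤ r := norm_nonneg _
  have hga1 : 1 ≤ g a := hge a ha0
  have hga0 : 0 < g a := by linarith
  -- t ≤ C₀ * (1 + a)
  have hsq1 : 1 ≤ Real.sqrt (g a) := by
    rw [show (1:ℝ) = Real.sqrt 1 by simp]
    exact Real.sqrt_le_sqrt hga1
  have htCa : t ≤ C₀ * (1 + a) := by
    have h1 : (1 + a) / Real.sqrt (g a) ≤ 1 + a := by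
      rw [div_le_iff₀ (by linarith)]; nlinarith
    calc t ≤ C₀ * ((1 + a) / Real.sqrt (g a)) := htle
      _ ≤ C₀ * (1 + a) := by nlinarith
  -- √t ≤ √C₀ * (1+a)
  have hst : Real.sqrt t ≤ Real.sqrt C₀ * (1 + a) := by
    have h1 : Real.sqrt t ≤ Real.sqrt (C₀ * (1 + a)) := Real.sqrt_le_sqrt htCa
    have h2 : Real.sqrt (C₀ * (1 + a)) = Real.sqrt C₀ * Real.sqrt (1 + a) :=
      Real.sqrt_mul hC₀.le _
    have h3 : Real.sqrt (1 + a) ≤ 1 + a := by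
      nlinarith [Real.sq_sqrt (show (0:ℝ) ≤ 1 + a by linarith),
        Real.sqrt_nonneg (1 + a), sq_nonneg (Real.sqrt (1 + a) - 1)]
    have h4 : 0 ≤ Real.sqrt C₀ := Real.sqrt_nonneg _
    calc Real.sqrt t ≤ Real.sqrt C₀ * Real.sqrt (1 + a) := by rw [← h2]; exact h1
      _ ≤ Real.sqrt C₀ * (1 + a) := by nlinarith
  -- b ≤ A * (1 + a)
  have hbA : b ≤ A * (1 + a) := by
    have h1 : b ≤ a + r := by
      have := norm_sub_norm_le y x
      have h2 : ‖y - x‖ = r := by rw [hr, norm_sub_rev]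
      linarith [this, h2 ▸ this]
    have h2 : r ≤ c₁ * (Real.sqrt C₀ * (1 + a)) := by
      calc r ≤ c₁ * Real.sqrt t := hdist
        _ ≤ c₁ * (Real.sqrt C₀ * (1 + a)) := by nlinarith
    have hAe : A * (1 + a) = (1 + a) + c₁ * (Real.sqrt C₀ * (1 + a)) := by
      rw [hAdef]; ring
    calc b ≤ a + c₁ * (Real.sqrt C₀ * (1 + a)) := by linarith
      _ ≤ A * (1 + a) := by rw [hAe]; linarith
  -- g b ≤ M * g a
  have hgb : g b ≤ M * g a := by
    rcases le_or_gt 1 a with hcase | hcase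
    · have h1 : b ≤ 2 ^ n * a := by
        have hAa : A * (1 + a) ≤ 2 * A * a := by nlinarith
        have h2 : 2 * A * a ≤ 2 ^ n * a :=
          mul_le_mul_of_nonneg_right hn.le ha0
        linarith
      calc g b ≤ g (2 ^ n * a) := hmono b _ hb0 h1
        _ ≤ c₀ ^ n * g a := hiter n a ha0
        _ ≤ M * g a := by
            have : c₀ ^ n ≤ M := le_max_left _ _
            nlinarith
    · have h1 : b ≤ 2 * A := by nlinarith
      calc g b ≤ g (2 * A) := hmono b _ hb0 h1
        _ ≤ M := le_max_right _ _
        _ ≤ M * g a := by nlinarith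
  -- √(g b) ≤ √M * √(g a)
  have hsgb : Real.sqrt (g b) ≤ Real.sqrt M * Real.sqrt (g a) := by
    rw [← Real.sqrt_mul (by linarith : (0:ℝ) ≤ M)]
    exact Real.sqrt_le_sqrt hgb
  -- √(t * g a) ≤ 1 + t * g a
  have hkey : Real.sqrt (t * g a) ≤ 1 + t * g a := by
    have h1 : 0 ≤ Real.sqrt (t * g a) := Real.sqrt_nonneg _
    have h2 : Real.sqrt (t * g a) ^ 2 = t * g a := Real.sq_sqrt (by positivity)
    nlinarith
  -- term 1
  have hT1 : r * Real.sqrt (g b) ≤ c₁ * Real.sqrt M * (1 + t * g a) := by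
    have hsM : 0 ≤ Real.sqrt M := Real.sqrt_nonneg _
    have hsga : 0 ≤ Real.sqrt (g a) := Real.sqrt_nonneg _
    have hst0 : 0 ≤ Real.sqrt t := Real.sqrt_nonneg _
    have h1 : r * Real.sqrt (g b) ≤ (c₁ * Real.sqrt t) * (Real.sqrt M * Real.sqrt (g a)) := by
      nlinarith [Real.sqrt_nonneg (g b)]
    have h2 : Real.sqrt t * Real.sqrt (g a) = Real.sqrt (t * g a) :=
      (Real.sqrt_mul ht.le _).symm
    calc r * Real.sqrt (g b) ≤ c₁ * Real.sqrt M * (Real.sqrt t * Real.sqrt (g a)) := by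
          nlinarith
      _ = c₁ * Real.sqrt M * Real.sqrt (t * g a) := by rw [h2]
      _ ≤ c₁ * Real.sqrt M * (1 + t * g a) :=
          mul_le_mul_of_nonneg_left hkey (by positivity)
  -- term 2
  have hT2 : r ^ 2 / t ≤ c₁ ^ 2 * (1 + t * g a) := by
    have hst0 : 0 ≤ Real.sqrt t := Real.sqrt_nonneg _
    have hst2 : Real.sqrt t ^ 2 = t := Real.sq_sqrt ht.le
    have h1 : r ^ 2 ≤ c₁ ^ 2 * t := by nlinarith
    have h2 : r ^ 2 / t ≤ c₁ ^ 2 := by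
      rw [div_le_iff₀ ht]; linarith
    have h3 : 1 ≤ 1 + t * g a := by nlinarith
    nlinarith
  linarith
end

section
/- Let a, b > 0. Then for all s, t with 0 < s < t, the inequality (t-s)^{-d/2} exp(-a·r²/(t-s)) · (r²/s)^{d/2} exp(-a·r²/s) · s^{-1} ≤ C·t^{-d/2-1}·exp(-c·r²/t)·exp(-c·r²/s) holds for all r > 2C₀ t^{1/2}, where C, c > 0 depend only on a, d, C₀. -/
/-!
Write `p = d/2` and split each Gaussian factor as `exp (-a r²/x) = exp (-(a/2) r²/x)²`. One half of
each factor absorbs the polynomial singularity in its time variable, since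
`x^(-p) exp (-(a/2) r²/x) ≤ (2p/a)^p (r²)^(-p)` by the bound `y^p e^(-y) ≤ p^p e^(-p)`. The powers of
`r²` then collapse to `(r²)^(-(p+1))`, which is at most a constant times `t^(-(p+1))` in the region
`r² ≥ 4 C₀² t`, while the remaining halves give `exp (-(a/2) r²/t) exp (-(a/2) r²/s)` because
`t - s ≤ t`.
-/

open Real

lemma Real.rpow_mul_exp_neg_le {y p : ℝ} (hy : 0 ≤ y) (hp : 0 ≤ p) :
    y ^ p * exp (-y) ≤ p ^ p * exp (-p) := by
  rcases hp.eq_or_lt with rfl | hp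
  · simpa using hy
  have hyp : 0 ≤ y / p := div_nonneg hy hp.le
  calc y ^ p * exp (-y) = p ^ p * (y / p * exp (-(y / p))) ^ p := by
        rw [mul_rpow hyp (exp_pos _).le, div_rpow hy hp.le, ← exp_mul]
        field_simp
    _ ≤ p ^ p * exp (-1) ^ p := by
        gcongr
        exact mul_exp_neg_le_exp_neg_one _
    _ = p ^ p * exp (-p) := by rw [← exp_mul, neg_one_mul]

lemma Real.rpow_neg_mul_exp_neg_div_le {x p b R : ℝ} (hx : 0 < x) (hp : 0 ≤ p) (hb : 0 < b)
    (hR : 0 < R) : x ^ (-p) * exp (-b * R / x) ≤ (p / b) ^ p * R ^ (-p) := by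
  have hy : 0 ≤ b * R / x := by positivity
  calc x ^ (-p) * exp (-b * R / x)
      = ((b * R) ^ p)⁻¹ * ((b * R / x) ^ p * exp (-(b * R / x))) := by
        rw [div_rpow (by positivity) hx.le, rpow_neg hx.le, neg_mul, neg_div]
        field_simp
    _ ≤ ((b * R) ^ p)⁻¹ * (p ^ p * exp (-p)) := by
        exact mul_le_mul_of_nonneg_left (rpow_mul_exp_neg_le hy hp) (by positivity)
    _ ≤ ((b * R) ^ p)⁻¹ * p ^ p := by
        gcongr
        exact mul_le_of_le_one_right (by positivity) (exp_le_one_iff.2 (by linarith))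
    _ = (p / b) ^ p * R ^ (-p) := by
        rw [div_rpow hp hb.le, mul_rpow hb.le hR.le, rpow_neg hR.le]
        field_simp

lemma kernel_product_le {p a R s t : ℝ} (hp : 0 ≤ p) (ha : 0 < a) (hR : 0 < R) (hs : 0 < s)
    (hst : s < t) :
    (t - s) ^ (-p) * exp (-a * R / (t - s)) * (R / s) ^ p * exp (-a * R / s) * s⁻¹ ≤
      (2 * p / a) ^ p * (2 * (p + 1) / a) ^ (p + 1) * R ^ (-(p + 1)) *
        exp (-(a / 2) * R / t) * exp (-(a / 2) * R / s) := by
  have hts : 0 < t - s := sub_pos.2 hst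
  have ha2 : 0 < a / 2 := half_pos ha
  have halve : ∀ x, exp (-a * R / x) = exp (-(a / 2) * R / x) * exp (-(a / 2) * R / x) := by
    intro x
    rw [← exp_add]
    ring_nf
  have hE := rpow_neg_mul_exp_neg_div_le hts hp ha2 hR
  have hF := rpow_neg_mul_exp_neg_div_le (p := p + 1) hs (by linarith) ha2 hR
  have hEt : exp (-(a / 2) * R / (t - s)) ≤ exp (-(a / 2) * R / t) := by
    rw [exp_le_exp, neg_mul, neg_div, neg_div, neg_le_neg_iff]
    gcongr
    linarith
  have hRR : R ^ (-p) * R ^ p = 1 := by rw [← rpow_add hR, neg_add_cancel, rpow_zero]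
  have hs1 : s ^ (-p) * s⁻¹ = s ^ (-(p + 1)) := by
    rw [← rpow_neg_one, ← rpow_add hs, neg_add]
  calc (t - s) ^ (-p) * exp (-a * R / (t - s)) * (R / s) ^ p * exp (-a * R / s) * s⁻¹
      = ((t - s) ^ (-p) * exp (-(a / 2) * R / (t - s))) * exp (-(a / 2) * R / (t - s)) *
          R ^ p * (s ^ (-(p + 1)) * exp (-(a / 2) * R / s)) * exp (-(a / 2) * R / s) := by
        rw [halve, halve, div_rpow hR.le hs.le, ← hs1, rpow_neg hs.le]
        ring
    _ ≤ ((p / (a / 2)) ^ p * R ^ (-p)) * exp (-(a / 2) * R / t) * R ^ p *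
          (((p + 1) / (a / 2)) ^ (p + 1) * R ^ (-(p + 1))) * exp (-(a / 2) * R / s) := by
        gcongr
    _ = (2 * p / a) ^ p * (2 * (p + 1) / a) ^ (p + 1) * R ^ (-(p + 1)) *
          exp (-(a / 2) * R / t) * exp (-(a / 2) * R / s) := by
        rw [div_div_eq_mul_div, div_div_eq_mul_div, mul_comm p, mul_comm (p + 1)]
        linear_combination ((2 * p / a) ^ p * (2 * (p + 1) / a) ^ (p + 1) * R ^ (-(p + 1)) *
          exp (-(a / 2) * R / t) * exp (-(a / 2) * R / s)) * hRR

theorem convolution_kernel_inequality_general (d : ℕ) (a C₀ : ℝ)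
    (ha : 0 < a) (hC₀ : 0 < C₀) :
    ∃ C c : ℝ, 0 < C ∧ 0 < c ∧
      ∀ r s t : ℝ, 0 < s → s < t → r > 2 * C₀ * Real.sqrt t →
        (t - s) ^ (-(d : ℝ) / 2) * Real.exp (-a * r ^ 2 / (t - s)) *
            (r ^ 2 / s) ^ ((d : ℝ) / 2) * Real.exp (-a * r ^ 2 / s) * s⁻¹ ≤
          C * t ^ (-(d : ℝ) / 2 - 1) * Real.exp (-c * r ^ 2 / t) *
            Real.exp (-c * r ^ 2 / s) := by
  set p : ℝ := d / 2
  have hp : 0 ≤ p := by positivity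
  have hpow : 0 < (2 * p / a) ^ p := by
    rcases hp.eq_or_lt with hp0 | hp0
    · simp [← hp0]
    · positivity
  refine ⟨(2 * p / a) ^ p * (2 * (p + 1) / a) ^ (p + 1) * (4 * C₀ ^ 2) ^ (-(p + 1)), a / 2,
    mul_pos (mul_pos hpow (by positivity)) (by positivity), half_pos ha, fun r s t hs hst hr => ?_⟩
  have ht : 0 < t := hs.trans hst
  have hr0 : 0 < r := lt_of_le_of_lt (by positivity) hr
  have hr2 : 4 * C₀ ^ 2 * t ≤ r ^ 2 := by
    have := pow_le_pow_left₀ (by positivity) hr.le 2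
    rwa [mul_pow, sq_sqrt ht.le, mul_pow, show (2 : ℝ) ^ 2 = 4 by norm_num] at this
  rw [neg_div, show -p - 1 = -(p + 1) by ring]
  calc _ ≤ _ := kernel_product_le hp ha (by positivity) hs hst
    _ ≤ (2 * p / a) ^ p * (2 * (p + 1) / a) ^ (p + 1) * (4 * C₀ ^ 2 * t) ^ (-(p + 1)) *
          exp (-(a / 2) * r ^ 2 / t) * exp (-(a / 2) * r ^ 2 / s) := by
        gcongr _ * _ * ?_ * _ * _
        exact rpow_le_rpow_of_nonpos (by positivity) hr2 (by linarith)
    _ = _ := by rw [mul_rpow (by positivity) ht.le]; ring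

theorem convolution_kernel_inequality (d : ℕ) (hd : 1 ≤ d) (a C₀ : ℝ)
    (ha : 0 < a) (hC₀ : 0 < C₀) :
    ∃ C c : ℝ, 0 < C ∧ 0 < c ∧
      ∀ r s t : ℝ, 0 < s → s < t → r > 2 * C₀ * Real.sqrt t →
        (t - s) ^ (-(d : ℝ) / 2) * Real.exp (-a * r ^ 2 / (t - s)) *
            (r ^ 2 / s) ^ ((d : ℝ) / 2) * Real.exp (-a * r ^ 2 / s) * s⁻¹ ≤
          C * t ^ (-(d : ℝ) / 2 - 1) * Real.exp (-c * r ^ 2 / t) *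
            Real.exp (-c * r ^ 2 / s) :=
  convolution_kernel_inequality_general d a C₀ ha hC₀
end

section
/- For any a > 0 there exist constants c₁, c₂, c₃, c₄ > 0 such that for all g ≥ 1, R > 0, t > 0: ∫₀^{t/2} exp(-a(s·g + R²/s))·s^{-1} ds ≥ c₁·exp(-c₂·R²/t) when t ≤ 4R/√g, and ∫₀^{t/2} exp(-a(s·g + R²/s))·s^{-1} ds ≥ c₃·exp(-c₄·R·√g) when t > 4R/√g. -/
/-!
On `(0, t/2]` the integrand is nonnegative and bounded by `(a R²)⁻¹`, hence integrable, so the integral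
is at least the integral over any window `[β/2, β] ⊆ (0, t/2]`. There the integrand is at least
`exp (-a (β g + 2 R² / β)) / β`, giving the lower bound `exp (-a (β g + 2 R² / β)) / 2`. For short
times take `β = t/2`; for long times take `β = 2R/√g`, the scale balancing `s g` against `R² / s`.
-/

open MeasureTheory Set Real

noncomputable def heatIntegrand (a g R s : ℝ) : ℝ :=
  exp (-a * (s * g + R ^ 2 / s)) * s⁻¹

lemma exp_neg_div_mul_inv_le {b s : ℝ} (hb : 0 < b) (hs : 0 < s) :
    exp (-(b / s)) * s⁻¹ ≤ b⁻¹ := by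
  have hexp : exp (-(b / s)) ≤ s / b := by
    rw [exp_neg, inv_le_comm₀ (exp_pos _) (by positivity), inv_div]
    linarith [add_one_le_exp (b / s)]
  calc exp (-(b / s)) * s⁻¹ ≤ s / b * s⁻¹ := by gcongr
    _ = b⁻¹ := by field_simp

lemma heatIntegrand_nonneg (a g R : ℝ) {s : ℝ} (hs : 0 ≤ s) : 0 ≤ heatIntegrand a g R s := by
  unfold heatIntegrand; positivity

lemma heatIntegrand_le {a g R s : ℝ} (ha : 0 < a) (hg : 0 ≤ g) (hR : R ≠ 0) (hs : 0 < s) :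
    heatIntegrand a g R s ≤ (a * R ^ 2)⁻¹ := by
  have hphase : -a * (s * g + R ^ 2 / s) ≤ -(a * R ^ 2 / s) := by
    have : 0 ≤ a * (s * g) := by positivity
    linarith [show -a * (s * g + R ^ 2 / s) = -(a * (s * g)) - a * R ^ 2 / s by ring]
  calc heatIntegrand a g R s ≤ exp (-(a * R ^ 2 / s)) * s⁻¹ := by
        unfold heatIntegrand; gcongr
    _ ≤ (a * R ^ 2)⁻¹ := exp_neg_div_mul_inv_le (by positivity) hs

lemma integrableOn_heatIntegrand {a g R : ℝ} (ha : 0 < a) (hg : 0 ≤ g) (hR : R ≠ 0) (T : ℝ) :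
    IntegrableOn (heatIntegrand a g R) (Ioc 0 T) := by
  refine Measure.integrableOn_of_bounded (M := (a * R ^ 2)⁻¹) (by simp [volume_Ioc]) ?_ ?_
  · exact (by unfold heatIntegrand; fun_prop : Measurable (heatIntegrand a g R)).aestronglyMeasurable
  · filter_upwards [ae_restrict_mem measurableSet_Ioc] with s hs
    rw [norm_of_nonneg (heatIntegrand_nonneg a g R hs.1.le)]
    exact heatIntegrand_le ha hg hR hs.1

lemma sub_mul_le_setIntegral_Ioc {f : ℝ → ℝ} {T₀ T α β m : ℝ}
    (hf : IntegrableOn f (Ioc T₀ T)) (hf0 : ∀ s ∈ Ioc T₀ T, 0 ≤ f s)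
    (hα : T₀ ≤ α) (hαβ : α ≤ β) (hβ : β ≤ T) (hm : ∀ s ∈ Ioc α β, m ≤ f s) :
    (β - α) * m ≤ ∫ s in Ioc T₀ T, f s := by
  have hsub : Ioc α β ⊆ Ioc T₀ T := Ioc_subset_Ioc hα hβ
  calc (β - α) * m = m * (volume (Ioc α β)).toReal := by
        rw [volume_Ioc, ENNReal.toReal_ofReal (by linarith), mul_comm]
    _ ≤ ∫ s in Ioc α β, f s :=
        setIntegral_ge_of_const_le_real measurableSet_Ioc (by simp [volume_Ioc]) hm
          (hf.mono_set hsub)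
    _ ≤ ∫ s in Ioc T₀ T, f s :=
        setIntegral_mono_set hf
          (by filter_upwards [ae_restrict_mem measurableSet_Ioc] with s hs using hf0 s hs)
          hsub.eventuallyLE

lemma phase_le_of_mem_Icc_half {g R β s : ℝ} (hg : 0 ≤ g) (hβ : 0 < β)
    (hs : s ∈ Icc (β / 2) β) : s * g + R ^ 2 / s ≤ β * g + 2 * R ^ 2 / β := by
  have hR : R ^ 2 / s ≤ R ^ 2 / (β / 2) := by gcongr; exact hs.1
  have hsg : s * g ≤ β * g := by gcongr; exact hs.2
  linarith [show R ^ 2 / (β / 2) = 2 * R ^ 2 / β by field_simp]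

lemma half_exp_le_setIntegral_heatIntegrand {a g R β T : ℝ} (ha : 0 < a) (hg : 0 ≤ g)
    (hR : R ≠ 0) (hβ : 0 < β) (hβT : β ≤ T) :
    exp (-(a * (β * g + 2 * R ^ 2 / β))) / 2 ≤ ∫ s in Ioc 0 T, heatIntegrand a g R s := by
  have hwindow : ∀ s ∈ Ioc (β / 2) β,
      exp (-(a * (β * g + 2 * R ^ 2 / β))) * β⁻¹ ≤ heatIntegrand a g R s := by
    intro s hs
    have hs0 : 0 < s := lt_trans (by positivity) hs.1
    have hphase := phase_le_of_mem_Icc_half (R := R) hg hβ (Ioc_subset_Icc_self hs)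
    unfold heatIntegrand
    gcongr
    · nlinarith
    · exact hs.2
  have h := sub_mul_le_setIntegral_Ioc (integrableOn_heatIntegrand ha hg hR T)
    (fun s hs => heatIntegrand_nonneg a g R hs.1.le) (by positivity) (by linarith) hβT hwindow
  calc exp (-(a * (β * g + 2 * R ^ 2 / β))) / 2
      = (β - β / 2) * (exp (-(a * (β * g + 2 * R ^ 2 / β))) * β⁻¹) := by field_simp; ring
    _ ≤ _ := h

lemma short_time_phase_le {g R t : ℝ} (hg : 0 < g) (ht : 0 < t) (hshort : t ≤ 4 * R / √g) :
    t / 2 * g + 2 * R ^ 2 / (t / 2) ≤ 12 * R ^ 2 / t := by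
  have hsg : 0 < √g := sqrt_pos.2 hg
  have htg : t * √g ≤ 4 * R := (le_div_iff₀ hsg).1 hshort
  have hsq : t ^ 2 * g ≤ 16 * R ^ 2 := by
    have := mul_le_mul htg htg (by positivity) ((mul_pos ht hsg).le.trans htg)
    nlinarith [mul_self_sqrt hg.le]
  rw [← sub_nonneg]
  have : 12 * R ^ 2 / t - (t / 2 * g + 2 * R ^ 2 / (t / 2)) = (16 * R ^ 2 - t ^ 2 * g) / (2 * t) := by
    field_simp; ring
  rw [this]
  exact div_nonneg (by linarith) (by positivity)

lemma long_time_phase_eq {g R : ℝ} (hg : 0 < g) (hR : R ≠ 0) :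
    2 * R / √g * g + 2 * R ^ 2 / (2 * R / √g) = 3 * (R * √g) := by
  have hsg : 0 < √g := sqrt_pos.2 hg
  field_simp
  rw [sq_sqrt hg.le]
  ring

theorem lower_integral_bound (a : ℝ) (ha : 0 < a) :
    ∃ c₁ c₂ c₃ c₄ : ℝ, 0 < c₁ ∧ 0 < c₂ ∧ 0 < c₃ ∧ 0 < c₄ ∧
      ∀ g R t : ℝ, 1 ≤ g → 0 < R → 0 < t →
        (t ≤ 4 * R / Real.sqrt g →
          c₁ * Real.exp (-c₂ * R ^ 2 / t) ≤
            ∫ s in Set.Ioc (0:ℝ) (t / 2),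
              Real.exp (-a * (s * g + R ^ 2 / s)) * s⁻¹) ∧
        (t > 4 * R / Real.sqrt g →
          c₃ * Real.exp (-c₄ * (R * Real.sqrt g)) ≤
            ∫ s in Set.Ioc (0:ℝ) (t / 2),
              Real.exp (-a * (s * g + R ^ 2 / s)) * s⁻¹) := by
  refine ⟨1 / 2, 12 * a, 1 / 2, 3 * a, by norm_num, by positivity, by norm_num, by positivity,
    fun g R t hg hR ht => ⟨fun hshort => ?_, fun hlong => ?_⟩⟩
  · have hexp : exp (-(12 * a) * R ^ 2 / t) ≤ exp (-(a * (t / 2 * g + 2 * R ^ 2 / (t / 2)))) := by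
      rw [show -(12 * a) * R ^ 2 / t = -(a * (12 * R ^ 2 / t)) by ring]
      gcongr
      exact short_time_phase_le (by linarith) ht hshort
    calc 1 / 2 * exp (-(12 * a) * R ^ 2 / t)
        ≤ exp (-(a * (t / 2 * g + 2 * R ^ 2 / (t / 2)))) / 2 := by linarith
      _ ≤ _ := half_exp_le_setIntegral_heatIntegrand ha (by linarith) hR.ne' (by positivity) le_rfl
  · have hsg : 0 < √g := sqrt_pos.2 (by linarith)
    have hβ : 2 * R / √g ≤ t / 2 := by
      rw [gt_iff_lt, div_lt_iff₀ hsg] at hlong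
      rw [div_le_iff₀ hsg]
      linarith
    calc 1 / 2 * exp (-(3 * a) * (R * √g))
        = exp (-(a * (2 * R / √g * g + 2 * R ^ 2 / (2 * R / √g)))) / 2 := by
          rw [long_time_phase_eq (by linarith) hR.ne']; ring_nf
      _ ≤ _ := half_exp_le_setIntegral_heatIntegrand ha (by linarith) hR.ne' (by positivity) hβ
end
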